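/- arXiv:1805.04663 — 4 statements merged into one kernel-verified Lean document; each statement's English description precedes it below -/
import Mathlib

section
/- For each ω ∈ Ω the Bochner integral x̂(ω) := (1/√ε) ∫_{−∞}^0 S(−s/ε) σ · z(θ_s ω) ds converges absolutely, and for every t ≥ 0 and every ω ∈ Ω one has the stationarity identity x̂(θ_t ω) = S(t/ε) x̂(ω) + (1/√ε) ∫_0^t S((t−s)/ε) σ · z(θ_s ω) ds; that is, t ↦ x̂(θ_t ω) is a mild solution of the linear equation ẋ = (1/ε)Ax + (σ/√ε) z(θ_t ω), where A generates S. -/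
open MeasureTheory

open Set in
lemma exp_integrableOn_Iic {b : ℝ} (hb : 0 < b) (c : ℝ) :
    IntegrableOn (fun s : ℝ => Real.exp (b * s)) (Set.Iic c) := by
  rw [← (Measure.measurePreserving_neg (volume : Measure ℝ)).integrableOn_comp_preimage
      (Homeomorph.neg ℝ).measurableEmbedding]
  simp only [Function.comp_def, neg_preimage, neg_Iic, mul_neg, ← neg_mul]
  exact Iff.mpr integrableOn_Ici_iff_integrableOn_Ioi (exp_neg_integrableOn_Ioi (-c) hb)

/-- For each `ω` the Bochner integral
`x̂(ω) = (1/√ε) ∫_{-∞}^0 S(-s/ε) σ · z(θ_s ω) ds` converges absolutely, and for every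
`t ≥ 0` and every `ω` one has the stationarity identity
`x̂(θ_t ω) = S(t/ε) x̂(ω) + (1/√ε) ∫_0^t S((t-s)/ε) σ · z(θ_s ω) ds`,
i.e. `t ↦ x̂(θ_t ω)` is a mild solution of `ẋ = (1/ε) A x + (σ/√ε) z(θ_t ω)`. -/
theorem stmt1
    {Ω : Type*} (θ : ℝ → Ω → Ω)
    (hθ0 : θ 0 = id) (hθadd : ∀ t s : ℝ, θ (t + s) = θ t ∘ θ s)
    (z : Ω → ℝ)
    (hzc : ∀ ω : Ω, Continuous fun s : ℝ => z (θ s ω))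
    (hzslow : ∀ ω : Ω, Filter.Tendsto (fun s : ℝ => z (θ s ω) / s) Filter.atBot (nhds 0))
    {H₁ : Type*} [NormedAddCommGroup H₁] [InnerProductSpace ℝ H₁] [CompleteSpace H₁]
    [TopologicalSpace.SeparableSpace H₁]
    (S : ℝ → H₁ →L[ℝ] H₁) (γ₁ : ℝ) (hγ₁ : 0 < γ₁)
    (hS0 : S 0 = 1)
    (hSadd : ∀ t s : ℝ, 0 ≤ t → 0 ≤ s → S (t + s) = (S t).comp (S s))
    (hScont : ∀ x : H₁, ContinuousOn (fun t : ℝ => S t x) (Set.Ici 0))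
    (hSdecay : ∀ t : ℝ, 0 ≤ t → ∀ x : H₁, ‖S t x‖ ≤ Real.exp (-γ₁ * t) * ‖x‖)
    (σ : H₁) (ε : ℝ) (hε : 0 < ε)
    (xhat : Ω → H₁)
    (hxhat : ∀ ω : Ω,
      xhat ω = (Real.sqrt ε)⁻¹ • ∫ s in Set.Iic (0:ℝ), z (θ s ω) • S (-s / ε) σ) :
    (∀ ω : Ω, IntegrableOn (fun s : ℝ => z (θ s ω) • S (-s / ε) σ) (Set.Iic 0)) ∧
    (∀ t : ℝ, 0 ≤ t → ∀ ω : Ω,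
      xhat (θ t ω) = S (t / ε) (xhat ω) +
        (Real.sqrt ε)⁻¹ • ∫ s in (0:ℝ)..t, z (θ s ω) • S ((t - s) / ε) σ) := by
  set a : ℝ := γ₁ / ε with ha
  have ha0 : 0 < a := div_pos hγ₁ hε
  -- continuity of the integrand on `Iic 0`
  have hfc : ∀ ω : Ω, ContinuousOn (fun s : ℝ => z (θ s ω) • S (-s / ε) σ) (Set.Iic 0) := by
    intro ω
    apply ((hzc ω).continuousOn).smul
    have h1 : ContinuousOn (fun s : ℝ => -s / ε) (Set.Iic 0) :=
      (continuous_neg.div_const ε).continuousOn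
    refine (hScont σ).comp h1 ?_
    intro s hs
    simp only [Set.mem_Ici]
    have : -s ≥ 0 := by simpa using hs
    positivity
  -- Part 1: integrability on `Iic 0`
  have hmain : ∀ ω : Ω, IntegrableOn (fun s : ℝ => z (θ s ω) • S (-s / ε) σ) (Set.Iic 0) := by
    intro ω
    -- choose M ≤ -1 with |z (θ s ω)| ≤ -s for s ≤ M
    obtain ⟨M₀, hM₀⟩ := Filter.eventually_atBot.mp
      ((Metric.tendsto_nhds.mp (hzslow ω) 1 one_pos))
    set M : ℝ := min M₀ (-1) with hM
    have hM1 : M ≤ -1 := min_le_right _ _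
    have hM0 : M ≤ 0 := hM1.trans (by norm_num)
    have hzbound : ∀ s : ℝ, s ≤ M → |z (θ s ω)| ≤ -s := by
      intro s hs
      have hsneg : s < 0 := lt_of_le_of_lt (hs.trans hM1) (by norm_num)
      have h1 := hM₀ s (hs.trans (min_le_left _ _))
      rw [Real.dist_eq, sub_zero, abs_div] at h1
      have habs : |s| = -s := abs_of_neg hsneg
      have : |z (θ s ω)| / (-s) < 1 := by rwa [habs] at h1
      have hsp : 0 < -s := by linarith
      nlinarith [(div_lt_one hsp).mp this]
    -- integrable on `Iic M`
    have hIic : IntegrableOn (fun s : ℝ => z (θ s ω) • S (-s / ε) σ) (Set.Iic M) := by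
      refine Integrable.mono' (g := fun s : ℝ => ((2 / a) * ‖σ‖) * Real.exp ((a / 2) * s))
        (((exp_integrableOn_Iic (by positivity) M)).const_mul _)
        (((hfc ω).mono (Set.Iic_subset_Iic.mpr hM0)).aestronglyMeasurable measurableSet_Iic) ?_
      rw [ae_restrict_iff' measurableSet_Iic]
      filter_upwards with s hs
      have hsM : s ≤ M := hs
      have hsneg : s < 0 := lt_of_le_of_lt (hsM.trans hM1) (by norm_num)
      have hns : 0 ≤ -s / ε := div_nonneg (by linarith) hε.le
      have hdecay := hSdecay (-s / ε) hns σ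
      have h1 : ‖z (θ s ω) • S (-s / ε) σ‖ ≤ (-s) * (Real.exp (a * s) * ‖σ‖) := by
        rw [norm_smul]
        have hz := hzbound s hsM
        have he : Real.exp (-γ₁ * (-s / ε)) = Real.exp (a * s) := by
          congr 1; rw [ha]; field_simp; try ring
        rw [he] at hdecay
        have hnn : (0:ℝ) ≤ Real.exp (a * s) * ‖σ‖ := by positivity
        calc |z (θ s ω)| * ‖S (-s / ε) σ‖
            ≤ (-s) * ‖S (-s / ε) σ‖ := by
              apply mul_le_mul_of_nonneg_right hz (norm_nonneg _)
          _ ≤ (-s) * (Real.exp (a * s) * ‖σ‖) := by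
              apply mul_le_mul_of_nonneg_left hdecay (by linarith)
      refine h1.trans ?_
      -- (-s) * exp(a s) ≤ (2/a) * exp((a/2) s)
      have key : (-s) * Real.exp ((a / 2) * s) ≤ 2 / a := by
        have hx : 0 ≤ -(a / 2) * s := by nlinarith
        set x : ℝ := -(a / 2) * s with hxdef
        have h2 : x * Real.exp (-x) ≤ 1 := by
          have h3 : x ≤ Real.exp x := (Real.add_one_le_exp x).trans' (by linarith)
          have h4 : 0 < Real.exp x := Real.exp_pos x
          calc x * Real.exp (-x) ≤ Real.exp x * Real.exp (-x) := by
                apply mul_le_mul_of_nonneg_right h3 (Real.exp_pos _).le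
            _ = 1 := by rw [← Real.exp_add]; simp
        have hseq : -s = (2 / a) * x := by rw [hxdef]; field_simp
        have hexp : Real.exp ((a / 2) * s) = Real.exp (-x) := by rw [hxdef]; ring_nf
        rw [hseq, hexp]
        calc 2 / a * x * Real.exp (-x) = (2 / a) * (x * Real.exp (-x)) := by ring
          _ ≤ (2 / a) * 1 := by
              apply mul_le_mul_of_nonneg_left h2 (by positivity)
          _ = 2 / a := mul_one _
      have heq : Real.exp (a * s) = Real.exp ((a/2) * s) * Real.exp ((a/2) * s) := by
        rw [← Real.exp_add]; congr 1; ring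
      have hle : Real.exp ((a/2) * s) ≤ 1 := by
        apply Real.exp_le_one_iff.mpr; nlinarith
      have hpos : (0:ℝ) < Real.exp ((a/2)*s) := Real.exp_pos _
      calc (-s) * (Real.exp (a * s) * ‖σ‖)
          = ((-s) * Real.exp ((a/2) * s)) * (Real.exp ((a/2) * s) * ‖σ‖) := by
            rw [heq]; ring
        _ ≤ (2 / a) * (Real.exp ((a/2) * s) * ‖σ‖) := by
            apply mul_le_mul_of_nonneg_right key (by positivity)
        _ = 2 / a * ‖σ‖ * Real.exp (a / 2 * s) := by ring
    -- integrable on `Icc M 0`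
    have hIcc : IntegrableOn (fun s : ℝ => z (θ s ω) • S (-s / ε) σ) (Set.Icc M 0) :=
      ((hfc ω).mono (Set.Icc_subset_Iic_self)).integrableOn_compact isCompact_Icc
    exact (hIic.union hIcc).mono_set (by
      intro s hs
      rcases le_or_gt s M with h | h
      · exact Or.inl h
      · exact Or.inr ⟨h.le, hs⟩)
  refine ⟨hmain, ?_⟩
  -- Part 2: stationarity
  intro t ht ω
  have htε : 0 ≤ t / ε := by positivity
  -- the shifted integrand
  set F : ℝ → H₁ := fun u => z (θ u ω) • S ((t - u) / ε) σ with hF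
  -- F agrees with S(t/ε) ∘ f on Iic 0
  have hFeq : ∀ u ∈ Set.Iic (0:ℝ),
      F u = S (t / ε) (z (θ u ω) • S (-u / ε) σ) := by
    intro u hu
    have hu0 : u ≤ 0 := hu
    have h1 : (t - u) / ε = t / ε + -u / ε := by ring
    have h2 : 0 ≤ -u / ε := div_nonneg (by linarith) hε.le
    rw [hF]
    simp only
    rw [h1, hSadd (t/ε) (-u/ε) htε h2]
    simp [ContinuousLinearMap.comp_apply]
  -- integrability of F on Iic 0
  have hFint0 : IntegrableOn F (Set.Iic 0) := by
    refine (IntegrableOn.congr_fun ?_ (fun u hu => (hFeq u hu).symm) measurableSet_Iic)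
    exact (S (t/ε)).integrable_comp (hmain ω)
  -- integrability of F on Ioc 0 t
  have hFcont : ContinuousOn F (Set.Icc 0 t) := by
    apply ((hzc ω).continuousOn).smul
    have h1 : ContinuousOn (fun u : ℝ => (t - u) / ε) (Set.Icc 0 t) :=
      ((continuous_const.sub continuous_id).div_const ε).continuousOn
    refine (hScont σ).comp h1 ?_
    intro u hu
    simp only [Set.mem_Ici]
    have : 0 ≤ t - u := by linarith [hu.2]
    positivity
  have hFintIoc : IntegrableOn F (Set.Ioc 0 t) :=
    (hFcont.integrableOn_compact isCompact_Icc).mono_set Set.Ioc_subset_Icc_self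
  -- change of variables
  have hshift : (∫ s in Set.Iic (0:ℝ), z (θ s (θ t ω)) • S (-s / ε) σ)
      = ∫ u in Set.Iic t, F u := by
    have hmp : MeasurePreserving (fun x : ℝ => x + t) volume volume :=
      measurePreserving_add_right volume t
    have hemb : MeasurableEmbedding (fun x : ℝ => x + t) :=
      (Homeomorph.addRight t).measurableEmbedding
    have := hmp.setIntegral_preimage_emb hemb F (Set.Iic t)
    rw [← this]
    have hpre : (fun x : ℝ => x + t) ⁻¹' Set.Iic t = Set.Iic 0 := by
      ext x; simp [Set.mem_preimage]
    rw [hpre]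
    apply setIntegral_congr_fun measurableSet_Iic
    intro s _
    have hθ : θ s (θ t ω) = θ (s + t) ω := by
      rw [hθadd s t]; rfl
    rw [hF]
    simp only
    rw [hθ]
    congr 2
    ring
  -- split the integral
  have hsplit : (∫ u in Set.Iic t, F u)
      = (∫ u in Set.Iic (0:ℝ), F u) + ∫ u in Set.Ioc (0:ℝ) t, F u := by
    rw [← setIntegral_union (Set.Iic_disjoint_Ioc le_rfl) measurableSet_Ioc hFint0 hFintIoc,
      Set.Iic_union_Ioc_eq_Iic ht]
  -- pull S(t/ε) out
  have hpull : (∫ u in Set.Iic (0:ℝ), F u)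
      = S (t / ε) (∫ s in Set.Iic (0:ℝ), z (θ s ω) • S (-s / ε) σ) := by
    rw [setIntegral_congr_fun measurableSet_Iic hFeq]
    exact ContinuousLinearMap.integral_comp_comm _ (hmain ω)
  -- interval integral is the Ioc set integral
  have hiv : (∫ s in (0:ℝ)..t, z (θ s ω) • S ((t - s) / ε) σ)
      = ∫ u in Set.Ioc (0:ℝ) t, F u := intervalIntegral.integral_of_le ht
  rw [hxhat (θ t ω), hxhat ω, hshift, hsplit, hpull, hiv, smul_add, (S (t / ε)).map_smul]
end

section
/- For every ρ > 0 and every ω ∈ Ω, the stationary solution x̂(ω) := (1/√ε) ∫_{−∞}^0 S(−s/ε) σ · z(θ_s ω) ds satisfies sup_{t ≤ 0} e^{(ρ/ε)t} ‖x̂(θ_t ω)‖ < ∞; i.e., the path t ↦ x̂(θ_t ω) on (−∞,0] belongs to the weighted space of continuous H₁-valued functions with finite norm sup_{t ≤ 0} e^{(ρ/ε)t}‖·(t)‖. -/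
open MeasureTheory

section Aux
open Set Real

lemma myIicOfIci {f : ℝ → ℝ} (hf : IntegrableOn (fun x => f (-x)) (Set.Ici (0:ℝ))) :
    IntegrableOn f (Set.Iic (0:ℝ)) := by
  have hmp : MeasurePreserving (fun s : ℝ => -s) (volume.restrict (Iic (0:ℝ)))
      (volume.restrict (Ici (0:ℝ))) := by
    refine ⟨measurable_neg, ?_⟩
    have h1 : Measure.map Neg.neg (volume : Measure ℝ) = volume :=
      (Measure.measurePreserving_neg volume).map_eq
    have h2 := Measure.restrict_map (μ := (volume : Measure ℝ))
      (measurable_neg : Measurable (Neg.neg : ℝ → ℝ))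
      (measurableSet_Ici : MeasurableSet (Ici (0:ℝ)))
    rw [h1] at h2
    simpa [Set.neg_preimage, Set.neg_Ici] using h2.symm
  have := (hmp.integrable_comp_emb (MeasurableEquiv.neg ℝ).measurableEmbedding).mpr hf
  exact (by simpa [Function.comp_def, neg_neg] using this :
    Integrable (fun x => f x) (volume.restrict (Iic 0)))

lemma myExpInt {c : ℝ} (hc : 0 < c) :
    IntegrableOn (fun s : ℝ => Real.exp (c * s)) (Set.Iic (0:ℝ)) := by
  apply myIicOfIci
  have h2 : IntegrableOn (fun x : ℝ => Real.exp (-c * x)) (Ici (0:ℝ)) :=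
    (integrableOn_Ici_iff_integrableOn_Ioi).mpr (exp_neg_integrableOn_Ioi 0 hc)
  exact h2.congr_fun (fun x _ => by ring_nf) measurableSet_Ici

lemma myAbsExpInt {c : ℝ} (hc : 0 < c) :
    IntegrableOn (fun s : ℝ => |s| * Real.exp (c * s)) (Set.Iic (0:ℝ)) := by
  apply myIicOfIci
  have h : IntegrableOn (fun x : ℝ => x ^ (1:ℝ) * Real.exp (-c * x ^ (1:ℝ))) (Ioi (0:ℝ)) :=
    integrableOn_rpow_mul_exp_neg_mul_rpow (by norm_num) one_pos hc
  have h2 : IntegrableOn (fun x : ℝ => |(-x)| * Real.exp (c * -x)) (Ioi (0:ℝ)) := by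
    apply h.congr_fun (fun x hx => ?_) measurableSet_Ioi
    rw [Real.rpow_one, abs_neg, abs_of_pos hx]
    ring_nf
  exact (integrableOn_Ici_iff_integrableOn_Ioi).mpr h2

lemma myMulExpLeOne {y : ℝ} (hy : 0 ≤ y) : y * Real.exp (-y) ≤ 1 := by
  have h1 : y ≤ Real.exp y := by linarith [Real.add_one_le_exp y]
  calc y * Real.exp (-y) ≤ Real.exp y * Real.exp (-y) :=
        mul_le_mul_of_nonneg_right h1 (Real.exp_pos _).le
    _ = 1 := by rw [← Real.exp_add]; simp

end Aux

/-- For every `ρ > 0` and every `ω`, the stationary solution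
`x̂(ω) = (1/√ε) ∫_{-∞}^0 S(-s/ε) σ · z(θ_s ω) ds` satisfies
`sup_{t ≤ 0} e^{(ρ/ε) t} ‖x̂(θ_t ω)‖ < ∞`: the path `t ↦ x̂(θ_t ω)` on `(-∞,0]`
belongs to the weighted space of continuous `H₁`-valued functions with finite
weighted sup-norm (continuity on `(-∞,0]` and boundedness of the weighted norm). -/
theorem stmt2
    {Ω : Type*} (θ : ℝ → Ω → Ω)
    (hθ0 : θ 0 = id) (hθadd : ∀ t s : ℝ, θ (t + s) = θ t ∘ θ s)
    (z : Ω → ℝ)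
    (hzc : ∀ ω : Ω, Continuous fun s : ℝ => z (θ s ω))
    (hzslow : ∀ ω : Ω, Filter.Tendsto (fun s : ℝ => z (θ s ω) / s) Filter.atBot (nhds 0))
    {H₁ : Type*} [NormedAddCommGroup H₁] [InnerProductSpace ℝ H₁] [CompleteSpace H₁]
    [TopologicalSpace.SeparableSpace H₁]
    (S : ℝ → H₁ →L[ℝ] H₁) (γ₁ : ℝ) (hγ₁ : 0 < γ₁)
    (hS0 : S 0 = 1)
    (hSadd : ∀ t s : ℝ, 0 ≤ t → 0 ≤ s → S (t + s) = (S t).comp (S s))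
    (hScont : ∀ x : H₁, ContinuousOn (fun t : ℝ => S t x) (Set.Ici 0))
    (hSdecay : ∀ t : ℝ, 0 ≤ t → ∀ x : H₁, ‖S t x‖ ≤ Real.exp (-γ₁ * t) * ‖x‖)
    (σ : H₁) (ε : ℝ) (hε : 0 < ε)
    (xhat : Ω → H₁)
    (hxhat : ∀ ω : Ω,
      xhat ω = (Real.sqrt ε)⁻¹ • ∫ s in Set.Iic (0:ℝ), z (θ s ω) • S (-s / ε) σ)
    (ρ : ℝ) (hρ : 0 < ρ) (ω : Ω) :
    ContinuousOn (fun t : ℝ => xhat (θ t ω)) (Set.Iic 0) ∧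
    BddAbove (Set.range
      (fun t : Set.Iic (0:ℝ) => Real.exp (ρ / ε * t.1) * ‖xhat (θ t.1 ω)‖)) := by
  have hflow : ∀ t s : ℝ, θ s (θ t ω) = θ (s + t) ω := by
    intro t s; rw [hθadd s t]; rfl
  set c : ℝ := γ₁ / ε with hc_def
  have hc : 0 < c := div_pos hγ₁ hε
  -- growth bound on z along the flow
  have growth : ∀ M : ℝ, ∃ C : ℝ, 0 ≤ C ∧ ∀ u ≤ M, |z (θ u ω)| ≤ C + |u| := by
    intro M
    have h1 : ∀ᶠ u in Filter.atBot, |z (θ u ω)| / |u| < 1 := by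
      have := Metric.tendsto_nhds.mp (hzslow ω) 1 one_pos
      simpa [Real.dist_eq, abs_div] using this
    obtain ⟨R, hR⟩ := Filter.eventually_atBot.mp h1
    set R' : ℝ := min R (-1) with hR'
    obtain ⟨C₀, hC₀⟩ := (isCompact_Icc : IsCompact (Set.Icc R' M)).exists_bound_of_continuousOn
      ((hzc ω).continuousOn)
    refine ⟨max C₀ 0, le_max_right _ _, fun u hu => ?_⟩
    by_cases h : u ≤ R'
    · have hu0 : u < 0 := lt_of_le_of_lt (h.trans (min_le_right _ _)) (by norm_num)
      have h2 := hR u (h.trans (min_le_left _ _))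
      have h3 : |z (θ u ω)| ≤ |u| := by
        have := (div_le_one (abs_pos.mpr hu0.ne)).mp h2.le
        exact this
      have : (0:ℝ) ≤ max C₀ 0 := le_max_right _ _
      linarith
    · have hmem : u ∈ Set.Icc R' M := ⟨(not_le.mp h).le, hu⟩
      have h2 := hC₀ u hmem
      rw [Real.norm_eq_abs] at h2
      have : (0:ℝ) ≤ |u| := abs_nonneg u
      have : C₀ ≤ max C₀ 0 := le_max_left _ _
      linarith [abs_nonneg u]
  -- decay bound for S on nonpositive times
  have hSbound : ∀ s : ℝ, s ≤ 0 → ‖S (-s/ε) σ‖ ≤ Real.exp (c * s) * ‖σ‖ := by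
    intro s hs
    have h1 : (0:ℝ) ≤ -s/ε := div_nonneg (neg_nonneg.mpr hs) hε.le
    have h2 := hSdecay (-s/ε) h1 σ
    have heq : -γ₁ * (-s/ε) = c * s := by
      rw [hc_def]; field_simp
    rwa [heq] at h2
  -- measurability
  have hSmeas : ContinuousOn (fun s : ℝ => S (-s/ε) σ) (Set.Iic (0:ℝ)) := by
    have hg : Continuous (fun s : ℝ => -s / ε) := (continuous_neg).div_const ε
    exact (hScont σ).comp hg.continuousOn
      (fun u hu => div_nonneg (neg_nonneg.2 hu) hε.le)
  have hmeas : ∀ t : ℝ, AEStronglyMeasurable (fun s : ℝ => z (θ s (θ t ω)) • S (-s/ε) σ)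
      (volume.restrict (Set.Iic (0:ℝ))) := fun t =>
    ((hzc (θ t ω)).aestronglyMeasurable).smul
      (hSmeas.aestronglyMeasurable measurableSet_Iic)
  obtain ⟨C, hC0, hCb⟩ := growth 0
  -- integrability of the bound functions
  have hint0 : IntegrableOn (fun s : ℝ => Real.exp (c*s) * ‖σ‖) (Set.Iic (0:ℝ)) :=
    (myExpInt hc).mul_const _
  have hint1 : IntegrableOn (fun s : ℝ => (C + |s|) * Real.exp (c*s) * ‖σ‖) (Set.Iic (0:ℝ)) := by
    have h := (((myExpInt hc).const_mul C).add (myAbsExpInt hc)).mul_const ‖σ‖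
    exact IntegrableOn.congr_fun h (fun s _ => by simp only [Pi.add_apply]; ring) measurableSet_Iic
  set K₀ : ℝ := ∫ s in Set.Iic (0:ℝ), Real.exp (c*s) * ‖σ‖ with hK₀def
  set K₁ : ℝ := ∫ s in Set.Iic (0:ℝ), (C + |s|) * Real.exp (c*s) * ‖σ‖ with hK₁def
  have hK₀ : 0 ≤ K₀ := integral_nonneg fun s => by positivity
  have hK₁ : 0 ≤ K₁ := integral_nonneg fun s =>
    mul_nonneg (mul_nonneg (add_nonneg hC0 (abs_nonneg s)) (Real.exp_pos _).le) (norm_nonneg _)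
  -- main pointwise bound
  have hmain : ∀ t : ℝ, t ≤ 0 → ‖xhat (θ t ω)‖ ≤ (Real.sqrt ε)⁻¹ * (K₁ + |t| * K₀) := by
    intro t ht
    rw [hxhat (θ t ω), norm_smul]
    have h1 : ‖(Real.sqrt ε)⁻¹‖ = (Real.sqrt ε)⁻¹ := by
      rw [Real.norm_eq_abs, abs_of_nonneg (by positivity)]
    rw [h1]
    refine mul_le_mul_of_nonneg_left ?_ (by positivity)
    have hb : ∀ᵐ s ∂(volume.restrict (Set.Iic (0:ℝ))),
        ‖z (θ s (θ t ω)) • S (-s/ε) σ‖ ≤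
          (C + |s|) * Real.exp (c*s) * ‖σ‖ + |t| * (Real.exp (c*s) * ‖σ‖) := by
      filter_upwards [ae_restrict_mem measurableSet_Iic] with s hs
      have hs0 : s ≤ 0 := hs
      rw [norm_smul, Real.norm_eq_abs, hflow t s]
      have hz : |z (θ (s+t) ω)| ≤ C + |s + t| := hCb _ (add_nonpos hs0 ht)
      have hst : |s + t| ≤ |s| + |t| := abs_add_le s t
      calc |z (θ (s+t) ω)| * ‖S (-s/ε) σ‖
          ≤ (C + |s| + |t|) * (Real.exp (c*s) * ‖σ‖) :=
            mul_le_mul (by linarith) (hSbound s hs0) (norm_nonneg _)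
              (by have := abs_nonneg s; have := abs_nonneg t; linarith)
        _ = (C + |s|) * Real.exp (c*s) * ‖σ‖ + |t| * (Real.exp (c*s) * ‖σ‖) := by ring
    have hbig : Integrable (fun s : ℝ =>
        (C + |s|) * Real.exp (c*s) * ‖σ‖ + |t| * (Real.exp (c*s) * ‖σ‖))
        (volume.restrict (Set.Iic (0:ℝ))) := hint1.add (hint0.const_mul _)
    have h2 := norm_integral_le_of_norm_le hbig hb
    rwa [integral_add hint1 (hint0.const_mul _), integral_const_mul] at h2
  constructor
  · -- continuity
    intro t₀ ht₀
    apply ContinuousAt.continuousWithinAt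
    have heq : (fun t : ℝ => xhat (θ t ω)) = fun t : ℝ =>
        (Real.sqrt ε)⁻¹ • ∫ s in Set.Iic (0:ℝ), z (θ s (θ t ω)) • S (-s/ε) σ := by
      funext t; exact hxhat (θ t ω)
    rw [heq]
    apply ContinuousAt.const_smul ?_ _
    obtain ⟨C', hC'0, hC'b⟩ := growth (t₀ + 1)
    apply continuousAt_of_dominated
      (bound := fun s : ℝ => (C' + |s| + (|t₀| + 1)) * (Real.exp (c*s) * ‖σ‖))
    · exact Filter.Eventually.of_forall hmeas
    · refine Filter.eventually_of_mem (Metric.ball_mem_nhds t₀ one_pos) (fun t ht => ?_)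
      rw [Metric.mem_ball, Real.dist_eq, abs_sub_lt_iff] at ht
      filter_upwards [ae_restrict_mem measurableSet_Iic] with s hs
      have hs0 : s ≤ 0 := hs
      rw [norm_smul, Real.norm_eq_abs, hflow t s]
      have h1 : s + t ≤ t₀ + 1 := by linarith [ht.1]
      have hz : |z (θ (s+t) ω)| ≤ C' + |s + t| := hC'b _ h1
      have h2 : |s + t| ≤ |s| + |t| := abs_add_le s t
      have h3 : |t| ≤ |t₀| + 1 := by
        have : |t| - |t₀| ≤ |t - t₀| := abs_sub_abs_le_abs_sub t t₀
        have : |t - t₀| < 1 := abs_sub_lt_iff.mpr ht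
        linarith [abs_sub_abs_le_abs_sub t t₀]
      exact mul_le_mul (by linarith) (hSbound s hs0) (norm_nonneg _)
        (by have := abs_nonneg s; have := abs_nonneg t₀; linarith)
    · have h := (((myExpInt hc).const_mul (C' + (|t₀| + 1))).add (myAbsExpInt hc)).mul_const ‖σ‖
      exact IntegrableOn.congr_fun h (fun s _ => by simp only [Pi.add_apply]; ring) measurableSet_Iic
    · refine Filter.Eventually.of_forall (fun s => ?_)
      have heq2 : (fun t : ℝ => z (θ s (θ t ω)) • S (-s/ε) σ) =
          fun t : ℝ => z (θ (s + t) ω) • S (-s/ε) σ := by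
        funext t; rw [hflow]
      rw [heq2]
      exact (((hzc ω).comp (continuous_const.add continuous_id)).smul
        continuous_const).continuousAt
  · -- boundedness
    refine ⟨(Real.sqrt ε)⁻¹ * (K₁ + (ε/ρ) * K₀), ?_⟩
    rintro x ⟨t, rfl⟩
    have ht : t.1 ≤ 0 := t.2
    have h1 := hmain t.1 ht
    have hexp1 : Real.exp (ρ/ε * t.1) ≤ 1 :=
      Real.exp_le_one_iff.mpr (mul_nonpos_of_nonneg_of_nonpos (by positivity) ht)
    have hexp2 : Real.exp (ρ/ε * t.1) * |t.1| ≤ ε/ρ := by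
      have hy : 0 ≤ ρ/ε * (-t.1) := mul_nonneg (by positivity) (by linarith)
      have h2 := myMulExpLeOne hy
      have h3 : |t.1| = (ε/ρ) * (ρ/ε * (-t.1)) := by
        rw [abs_of_nonpos ht]; field_simp
      rw [h3]
      have h4 : Real.exp (ρ/ε * t.1) = Real.exp (-(ρ/ε * (-t.1))) := by ring_nf
      rw [h4]
      calc Real.exp (-(ρ/ε * (-t.1))) * ((ε/ρ) * (ρ/ε * (-t.1)))
          = (ε/ρ) * ((ρ/ε * (-t.1)) * Real.exp (-(ρ/ε * (-t.1)))) := by ring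
        _ ≤ (ε/ρ) * 1 := mul_le_mul_of_nonneg_left h2 (by positivity)
        _ = ε/ρ := mul_one _
    calc Real.exp (ρ/ε * t.1) * ‖xhat (θ t.1 ω)‖
        ≤ Real.exp (ρ/ε * t.1) * ((Real.sqrt ε)⁻¹ * (K₁ + |t.1| * K₀)) :=
          mul_le_mul_of_nonneg_left h1 (Real.exp_pos _).le
      _ = (Real.sqrt ε)⁻¹ * (Real.exp (ρ/ε * t.1) * K₁ +
            (Real.exp (ρ/ε * t.1) * |t.1|) * K₀) := by ring
      _ ≤ (Real.sqrt ε)⁻¹ * (K₁ + (ε/ρ) * K₀) := by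
          refine mul_le_mul_of_nonneg_left ?_ (by positivity)
          have ha : Real.exp (ρ/ε * t.1) * K₁ ≤ K₁ := by nlinarith
          have hb : (Real.exp (ρ/ε * t.1) * |t.1|) * K₀ ≤ (ε/ρ) * K₀ :=
            mul_le_mul_of_nonneg_right hexp2 hK₀
          linarith
end

section
/- For every z = (x, y) ∈ C^−, the Lyapunov–Perron image J(z) is a well-defined element of C^− (both defining integrals converge absolutely) and satisfies the norm bound ‖J(z)‖ ≤ κ (‖z‖ + ‖x̂‖₁) + ‖ξ‖, where κ = K/(γ₁−ρ) + εK/(ρ−εγ₂). -/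
open MeasureTheory

/-- Joint continuity of `(r, v) ↦ T r v` for a strongly continuous, locally bounded
operator family. -/
lemma aux_joint_cont {H : Type*} [NormedAddCommGroup H] [NormedSpace ℝ H]
    (T : ℝ → H →L[ℝ] H) (C : ℝ → ℝ) (hC : Continuous C)
    (hb : ∀ r v, ‖T r v‖ ≤ C r * ‖v‖) (hc : ∀ v, Continuous fun r => T r v) :
    Continuous fun p : ℝ × H => T p.1 p.2 := by
  rw [continuous_iff_continuousAt]
  rintro ⟨r₀, v₀⟩
  have h1 : Filter.Tendsto (fun p : ℝ × H => T p.1 v₀) (nhds (r₀, v₀)) (nhds (T r₀ v₀)) :=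
    ((hc v₀).comp continuous_fst).continuousAt
  have h2 : Filter.Tendsto (fun p : ℝ × H => T p.1 (p.2 - v₀)) (nhds (r₀, v₀)) (nhds 0) := by
    apply squeeze_zero_norm' (a := fun p : ℝ × H => C p.1 * ‖p.2 - v₀‖)
    · exact Filter.Eventually.of_forall fun p => hb p.1 _
    · have h3 : Filter.Tendsto (fun p : ℝ × H => C p.1 * ‖p.2 - v₀‖) (nhds (r₀, v₀))
          (nhds (C r₀ * ‖v₀ - v₀‖)) :=
        (((hC.comp continuous_fst).mul ((continuous_snd.sub continuous_const).norm))).continuousAt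
      simpa using h3
  have h3 := h2.add h1
  rw [zero_add] at h3
  have heq : (fun p : ℝ × H => T p.1 p.2) = fun p : ℝ × H => T p.1 (p.2 - v₀) + T p.1 v₀ := by
    funext p
    rw [← map_add]
    congr 1
    abel
  unfold ContinuousAt
  rw [heq]
  simpa using h3

lemma integral_Iic_shift {E : Type*} [NormedAddCommGroup E] [NormedSpace ℝ E] (t : ℝ) (h : ℝ → E) :
    ∫ s in Set.Iic t, h s = ∫ u in Set.Ici (0:ℝ), h (t - u) := by
  have hemb : MeasurableEmbedding (fun u : ℝ => t - u) :=
    (MeasurableEquiv.subLeft t).measurableEmbedding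
  have hpre : (fun u : ℝ => t - u) ⁻¹' Set.Iic t = Set.Ici 0 := by
    ext u
    simp [sub_le_iff_le_add]
  have h2 := (Measure.measurePreserving_sub_left volume t).setIntegral_preimage_emb
    hemb h (Set.Iic t)
  rw [hpre] at h2
  exact h2.symm

lemma integrableOn_Iic_shift {E : Type*} [NormedAddCommGroup E] (t : ℝ) (h : ℝ → E) :
    IntegrableOn h (Set.Iic t) ↔ IntegrableOn (fun u => h (t - u)) (Set.Ici 0) := by
  have hemb : MeasurableEmbedding (fun u : ℝ => t - u) :=
    (MeasurableEquiv.subLeft t).measurableEmbedding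
  have hpre : (fun u : ℝ => t - u) ⁻¹' Set.Iic t = Set.Ici 0 := by
    ext u
    simp [sub_le_iff_le_add]
  have h2 := (Measure.measurePreserving_sub_left volume t).integrableOn_comp_preimage
    hemb (f := h) (s := Set.Iic t)
  rw [hpre] at h2
  exact h2.symm

lemma integrableOn_exp_neg_Ici {c : ℝ} (hc : 0 < c) :
    IntegrableOn (fun u : ℝ => Real.exp (-(c * u))) (Set.Ici 0) := by
  rw [integrableOn_Ici_iff_integrableOn_Ioi]
  simpa [neg_mul] using exp_neg_integrableOn_Ioi 0 hc

lemma integral_exp_neg_Ici {c : ℝ} (hc : 0 < c) :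
    ∫ u in Set.Ici (0:ℝ), Real.exp (-(c * u)) = c⁻¹ := by
  rw [MeasureTheory.integral_Ici_eq_integral_Ioi]
  have h1 := integral_comp_mul_left_Ioi (fun x => Real.exp (-x)) 0 hc
  simp only [mul_zero] at h1
  rw [h1, integral_exp_neg_Ioi]
  simp

lemma integrableOn_exp_Iic' {c : ℝ} (hc : 0 < c) (t : ℝ) :
    IntegrableOn (fun s : ℝ => Real.exp (c * s)) (Set.Iic t) := by
  rw [integrableOn_Iic_shift t]
  have h1 : (fun u : ℝ => Real.exp (c * (t - u)))
      = fun u : ℝ => Real.exp (c * t) * Real.exp (-(c * u)) := by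
    funext u
    rw [← Real.exp_add]
    congr 1
    ring
  simp only [h1]
  exact (integrableOn_exp_neg_Ici hc).const_mul (Real.exp (c * t))

lemma integral_exp_Iic_mul {c : ℝ} (hc : 0 < c) (t : ℝ) :
    ∫ s in Set.Iic t, Real.exp (c * s) = Real.exp (c * t) / c := by
  rw [integral_Iic_shift t]
  have h1 : (fun u : ℝ => Real.exp (c * (t - u)))
      = fun u : ℝ => Real.exp (c * t) * Real.exp (-(c * u)) := by
    funext u
    rw [← Real.exp_add]
    congr 1
    ring
  rw [show (∫ u in Set.Ici (0:ℝ), Real.exp (c * (t - u)))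
      = ∫ u in Set.Ici (0:ℝ), Real.exp (c * t) * Real.exp (-(c * u)) from by rw [h1]]
  rw [MeasureTheory.integral_const_mul, integral_exp_neg_Ici hc, div_eq_mul_inv]

noncomputable def wnorm {H : Type*} [NormedAddCommGroup H] (w : ℝ) (φ : ℝ → H) : ℝ :=
  ⨆ t : Set.Iic (0:ℝ), Real.exp (w * t.1) * ‖φ t.1‖

def MemCminus {H : Type*} [NormedAddCommGroup H] (w : ℝ) (φ : ℝ → H) : Prop :=
  ContinuousOn φ (Set.Iic 0) ∧
    BddAbove (Set.range (fun t : Set.Iic (0:ℝ) => Real.exp (w * t.1) * ‖φ t.1‖))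

lemma norm_le_wnorm {H : Type*} [NormedAddCommGroup H] {w : ℝ} {φ : ℝ → H}
    (h : BddAbove (Set.range fun t : Set.Iic (0:ℝ) => Real.exp (w * t.1) * ‖φ t.1‖))
    {s : ℝ} (hs : s ≤ 0) : ‖φ s‖ ≤ Real.exp (-(w * s)) * wnorm w φ := by
  have h1 : Real.exp (w * s) * ‖φ s‖ ≤ wnorm w φ :=
    le_ciSup h (⟨s, hs⟩ : Set.Iic (0:ℝ))
  have h2 : ‖φ s‖ = Real.exp (-(w * s)) * (Real.exp (w * s) * ‖φ s‖) := by
    rw [← mul_assoc, ← Real.exp_add, neg_add_cancel, Real.exp_zero, one_mul]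
  rw [h2]
  exact mul_le_mul_of_nonneg_left h1 (Real.exp_nonneg _)

lemma wnorm_nonneg' {H : Type*} [NormedAddCommGroup H] {w : ℝ} {φ : ℝ → H}
    (h : BddAbove (Set.range fun t : Set.Iic (0:ℝ) => Real.exp (w * t.1) * ‖φ t.1‖)) :
    0 ≤ wnorm w φ :=
  le_trans (by positivity) (le_ciSup h (⟨0, Set.self_mem_Iic⟩ : Set.Iic (0:ℝ)))

lemma wnorm_le' {H : Type*} [NormedAddCommGroup H] {w B : ℝ} {φ : ℝ → H}
    (h : ∀ t : ℝ, t ≤ 0 → Real.exp (w * t) * ‖φ t‖ ≤ B) : wnorm w φ ≤ B := by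
  have : Nonempty (Set.Iic (0:ℝ)) := ⟨⟨0, Set.self_mem_Iic⟩⟩
  exact ciSup_le fun t => h t.1 t.2

lemma bddAbove_of_wbound {H : Type*} [NormedAddCommGroup H] {w B : ℝ} {φ : ℝ → H}
    (h : ∀ t : ℝ, t ≤ 0 → Real.exp (w * t) * ‖φ t‖ ≤ B) :
    BddAbove (Set.range fun t : Set.Iic (0:ℝ) => Real.exp (w * t.1) * ‖φ t.1‖) := by
  refine ⟨B, ?_⟩
  rintro _ ⟨t, rfl⟩
  exact h t.1 t.2

set_option maxHeartbeats 2000000 in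
/-- For every `z = (x,y) ∈ C⁻`, the Lyapunov–Perron image `J(z)` is a
well-defined element of `C⁻` (both defining integrals converge absolutely) and satisfies
`‖J(z)‖ ≤ κ (‖z‖ + ‖x̂‖₁) + ‖ξ‖`, where `κ = K/(γ₁-ρ) + εK/(ρ-εγ₂)`. -/
theorem stmt3
    {H₁ H₂ : Type*}
    [NormedAddCommGroup H₁] [InnerProductSpace ℝ H₁] [CompleteSpace H₁]
    [TopologicalSpace.SeparableSpace H₁]
    [NormedAddCommGroup H₂] [InnerProductSpace ℝ H₂] [CompleteSpace H₂]
    [TopologicalSpace.SeparableSpace H₂]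
    (S : ℝ → H₁ →L[ℝ] H₁) (G : ℝ → H₂ →L[ℝ] H₂)
    (γ₁ γ₂ : ℝ) (hγ₁ : 0 < γ₁) (hγ₂ : 0 < γ₂)
    (hS0 : S 0 = 1)
    (hSadd : ∀ t s : ℝ, 0 ≤ t → 0 ≤ s → S (t + s) = (S t).comp (S s))
    (hScont : ∀ x : H₁, ContinuousOn (fun t : ℝ => S t x) (Set.Ici 0))
    (hSdecay : ∀ t : ℝ, 0 ≤ t → ∀ x : H₁, ‖S t x‖ ≤ Real.exp (-γ₁ * t) * ‖x‖)
    (hG0 : G 0 = 1)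
    (hGadd : ∀ t s : ℝ, G (t + s) = (G t).comp (G s))
    (hGcont : ∀ y : H₂, Continuous fun t : ℝ => G t y)
    (hGdecay : ∀ t : ℝ, t ≤ 0 → ∀ y : H₂, ‖G t y‖ ≤ Real.exp (-γ₂ * t) * ‖y‖)
    (f : H₁ × H₂ → H₁) (g : H₁ × H₂ → H₂) (K : ℝ) (hK : 0 < K)
    (hf : ∀ p q : H₁ × H₂, ‖f p - f q‖ ≤ K * (‖p.1 - q.1‖ + ‖p.2 - q.2‖))
    (hg : ∀ p q : H₁ × H₂, ‖g p - g q‖ ≤ K * (‖p.1 - q.1‖ + ‖p.2 - q.2‖))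
    (hf0 : f (0, 0) = 0) (hg0 : g (0, 0) = 0)
    (ε ρ : ℝ) (hε : 0 < ε) (hρ : 0 < ρ)
    (hgap : K < γ₁ - ρ) (hρε : 0 < ρ - ε * γ₂)
    (xhat : ℝ → H₁) (hxhat : MemCminus (ρ / ε) xhat)
    (ξ : H₂)
    (x : ℝ → H₁) (y : ℝ → H₂)
    (hx : MemCminus (ρ / ε) x) (hy : MemCminus (ρ / ε) y)
    (J₁ : ℝ → H₁) (J₂ : ℝ → H₂)
    (hJ₁ : ∀ t : ℝ,
      J₁ t = ε⁻¹ • ∫ s in Set.Iic t, S ((t - s) / ε) (f (x s + xhat s, y s)))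
    (hJ₂ : ∀ t : ℝ,
      J₂ t = G t ξ + ∫ s in (0:ℝ)..t, G (t - s) (g (x s + xhat s, y s))) :
    (∀ t : ℝ, t ≤ 0 →
      IntegrableOn (fun s : ℝ => S ((t - s) / ε) (f (x s + xhat s, y s))) (Set.Iic t)) ∧
    (∀ t : ℝ, t ≤ 0 →
      IntervalIntegrable (fun s : ℝ => G (t - s) (g (x s + xhat s, y s))) volume 0 t) ∧
    MemCminus (ρ / ε) J₁ ∧ MemCminus (ρ / ε) J₂ ∧
    wnorm (ρ / ε) J₁ + wnorm (ρ / ε) J₂ ≤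
      (K / (γ₁ - ρ) + ε * K / (ρ - ε * γ₂)) *
        ((wnorm (ρ / ε) x + wnorm (ρ / ε) y) + wnorm (ρ / ε) xhat) + ‖ξ‖ := by
  have hεne : ε ≠ 0 := ne_of_gt hε
  set w : ℝ := ρ / ε with hwdef
  have hwpos : 0 < w := div_pos hρ hε
  have hγρ : 0 < γ₁ - ρ := lt_trans hK hgap
  set c₁ : ℝ := γ₁ / ε - w with hc₁def
  have hc₁ : 0 < c₁ := by
    rw [hc₁def, hwdef, div_sub_div_same]
    exact div_pos hγρ hε
  set c₂ : ℝ := w - γ₂ with hc₂def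
  have hc₂ : 0 < c₂ := by
    rw [hc₂def, hwdef]
    rw [show ρ / ε - γ₂ = (ρ - ε * γ₂) / ε from by field_simp]
    exact div_pos hρε hε
  set M : ℝ := (wnorm w x + wnorm w y) + wnorm w xhat with hMdef
  have hMx := wnorm_nonneg' hx.2
  have hMy := wnorm_nonneg' hy.2
  have hMxh := wnorm_nonneg' hxhat.2
  have hM0 : 0 ≤ M := by rw [hMdef]; positivity
  -- Lipschitz continuity of f and g
  have hfcont : Continuous f := by
    have hL : LipschitzWith (Real.toNNReal (2 * K)) f := by
      apply LipschitzWith.of_dist_le_mul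
      intro p q
      rw [dist_eq_norm, dist_eq_norm]
      calc ‖f p - f q‖ ≤ K * (‖p.1 - q.1‖ + ‖p.2 - q.2‖) := hf p q
        _ ≤ K * (‖p - q‖ + ‖p - q‖) := by
            rw [← Prod.fst_sub, ← Prod.snd_sub]
            exact mul_le_mul_of_nonneg_left
              (add_le_add (norm_fst_le _) (norm_snd_le _)) hK.le
        _ = Real.toNNReal (2 * K) * ‖p - q‖ := by
            rw [Real.coe_toNNReal _ (by positivity)]
            ring
    exact hL.continuous
  have hgcont : Continuous g := by
    have hL : LipschitzWith (Real.toNNReal (2 * K)) g := by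
      apply LipschitzWith.of_dist_le_mul
      intro p q
      rw [dist_eq_norm, dist_eq_norm]
      calc ‖g p - g q‖ ≤ K * (‖p.1 - q.1‖ + ‖p.2 - q.2‖) := hg p q
        _ ≤ K * (‖p - q‖ + ‖p - q‖) := by
            rw [← Prod.fst_sub, ← Prod.snd_sub]
            exact mul_le_mul_of_nonneg_left
              (add_le_add (norm_fst_le _) (norm_snd_le _)) hK.le
        _ = Real.toNNReal (2 * K) * ‖p - q‖ := by
            rw [Real.coe_toNNReal _ (by positivity)]
            ring
    exact hL.continuous
  -- pointwise bounds on original nonlinearities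
  have hFb : ∀ s : ℝ, s ≤ 0 → ‖f (x s + xhat s, y s)‖ ≤ K * M * Real.exp (-(w * s)) := by
    intro s hs
    have h0 : ‖f (x s + xhat s, y s)‖ = ‖f (x s + xhat s, y s) - f (0, 0)‖ := by
      rw [hf0, sub_zero]
    rw [h0]
    refine le_trans (hf _ _) ?_
    simp only [sub_zero]
    have h2 := norm_le_wnorm hx.2 hs
    have h3 := norm_le_wnorm hxhat.2 hs
    have h4 := norm_le_wnorm hy.2 hs
    have h5 := norm_add_le (x s) (xhat s)
    have h6 : Real.exp (-(w * s)) * M = Real.exp (-(w * s)) * wnorm w x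
        + Real.exp (-(w * s)) * wnorm w y + Real.exp (-(w * s)) * wnorm w xhat := by
      rw [hMdef]; ring
    have h7 : ‖x s + xhat s‖ + ‖y s‖ ≤ Real.exp (-(w * s)) * M := by linarith
    calc K * (‖x s + xhat s‖ + ‖y s‖) ≤ K * (Real.exp (-(w * s)) * M) :=
          mul_le_mul_of_nonneg_left h7 hK.le
      _ = K * M * Real.exp (-(w * s)) := by ring
  have hGb : ∀ s : ℝ, s ≤ 0 → ‖g (x s + xhat s, y s)‖ ≤ K * M * Real.exp (-(w * s)) := by
    intro s hs
    have h0 : ‖g (x s + xhat s, y s)‖ = ‖g (x s + xhat s, y s) - g (0, 0)‖ := by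
      rw [hg0, sub_zero]
    rw [h0]
    refine le_trans (hg _ _) ?_
    simp only [sub_zero]
    have h2 := norm_le_wnorm hx.2 hs
    have h3 := norm_le_wnorm hxhat.2 hs
    have h4 := norm_le_wnorm hy.2 hs
    have h5 := norm_add_le (x s) (xhat s)
    have h6 : Real.exp (-(w * s)) * M = Real.exp (-(w * s)) * wnorm w x
        + Real.exp (-(w * s)) * wnorm w y + Real.exp (-(w * s)) * wnorm w xhat := by
      rw [hMdef]; ring
    have h7 : ‖x s + xhat s‖ + ‖y s‖ ≤ Real.exp (-(w * s)) * M := by linarith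
    calc K * (‖x s + xhat s‖ + ‖y s‖) ≤ K * (Real.exp (-(w * s)) * M) :=
          mul_le_mul_of_nonneg_left h7 hK.le
      _ = K * M * Real.exp (-(w * s)) := by ring
  -- clamped (globally continuous) versions
  set τ : ℝ → ℝ := fun s => min s 0 with hτdef
  have hτcont : Continuous τ := continuous_id.min continuous_const
  have hτle : ∀ s, τ s ≤ 0 := fun s => min_le_right _ _
  have hτeq : ∀ s : ℝ, s ≤ 0 → τ s = s := fun s hs => min_eq_left hs
  have hxc : Continuous fun s => x (τ s) :=
    hx.1.comp_continuous hτcont fun s => Set.mem_Iic.mpr (hτle s)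
  have hxhc : Continuous fun s => xhat (τ s) :=
    hxhat.1.comp_continuous hτcont fun s => Set.mem_Iic.mpr (hτle s)
  have hyc : Continuous fun s => y (τ s) :=
    hy.1.comp_continuous hτcont fun s => Set.mem_Iic.mpr (hτle s)
  set Ft : ℝ → H₁ := fun s => f (x (τ s) + xhat (τ s), y (τ s)) with hFtdef
  set Gt : ℝ → H₂ := fun s => g (x (τ s) + xhat (τ s), y (τ s)) with hGtdef
  have hFtc : Continuous Ft := hfcont.comp ((hxc.add hxhc).prodMk hyc)
  have hGtc : Continuous Gt := hgcont.comp ((hxc.add hxhc).prodMk hyc)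
  have hFteq : ∀ s : ℝ, s ≤ 0 → Ft s = f (x s + xhat s, y s) := by
    intro s hs
    rw [hFtdef]
    simp only [hτeq s hs]
  have hGteq : ∀ s : ℝ, s ≤ 0 → Gt s = g (x s + xhat s, y s) := by
    intro s hs
    rw [hGtdef]
    simp only [hτeq s hs]
  have hFtb : ∀ s : ℝ, ‖Ft s‖ ≤ K * M * Real.exp (-(w * τ s)) := fun s => by
    rw [hFtdef]
    exact hFb (τ s) (hτle s)
  -- clamped operators
  set Sc : ℝ → H₁ →L[ℝ] H₁ := fun r => S (max r 0) with hScdef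
  set Gc : ℝ → H₂ →L[ℝ] H₂ := fun r => G (min r 0) with hGcdef
  have hSceq : ∀ r : ℝ, 0 ≤ r → Sc r = S r := by
    intro r hr
    rw [hScdef]
    simp only [max_eq_left hr]
  have hGceq : ∀ r : ℝ, r ≤ 0 → Gc r = G r := by
    intro r hr
    rw [hGcdef]
    simp only [min_eq_left hr]
  have hSccont : Continuous fun p : ℝ × H₁ => Sc p.1 p.2 := by
    apply aux_joint_cont _ (fun r => Real.exp (-γ₁ * max r 0))
    · exact Real.continuous_exp.comp (continuous_const.mul (continuous_id.max continuous_const))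
    · intro r v
      exact hSdecay _ (le_max_right _ _) v
    · intro v
      exact (hScont v).comp_continuous (continuous_id.max continuous_const)
        fun r => Set.mem_Ici.mpr (le_max_right _ _)
  have hGccont : Continuous fun p : ℝ × H₂ => Gc p.1 p.2 := by
    apply aux_joint_cont _ (fun r => Real.exp (-γ₂ * min r 0))
    · exact Real.continuous_exp.comp (continuous_const.mul (continuous_id.min continuous_const))
    · intro r v
      exact hGdecay _ (min_le_right _ _) v
    · intro v
      exact (hGcont v).comp (continuous_id.min continuous_const)
  -- equality of integrands on `Iic t`
  have hint_eq : ∀ t : ℝ, t ≤ 0 → Set.EqOn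
      (fun s : ℝ => S ((t - s) / ε) (f (x s + xhat s, y s)))
      (fun s : ℝ => Sc ((t - s) / ε) (Ft s)) (Set.Iic t) := by
    intro t ht s hs
    have hs0 : s ≤ 0 := le_trans hs ht
    have hst : s ≤ t := hs
    simp only
    rw [hSceq _ (div_nonneg (by linarith) hε.le), hFteq s hs0]
  -- pointwise bound for the J₁ integrand
  have hptb : ∀ t : ℝ, t ≤ 0 → ∀ s ∈ Set.Iic t,
      ‖S ((t - s) / ε) (f (x s + xhat s, y s))‖
        ≤ K * M * Real.exp (-(γ₁ / ε * t)) * Real.exp (c₁ * s) := by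
    intro t ht s hs
    have hs0 : s ≤ 0 := le_trans hs ht
    have hst : s ≤ t := hs
    calc ‖S ((t - s) / ε) (f (x s + xhat s, y s))‖
        ≤ Real.exp (-γ₁ * ((t - s) / ε)) * ‖f (x s + xhat s, y s)‖ :=
          hSdecay _ (div_nonneg (by linarith) hε.le) _
      _ ≤ Real.exp (-γ₁ * ((t - s) / ε)) * (K * M * Real.exp (-(w * s))) :=
          mul_le_mul_of_nonneg_left (hFb s hs0) (Real.exp_nonneg _)
      _ = K * M * Real.exp (-γ₁ * ((t - s) / ε) + -(w * s)) := by
          rw [Real.exp_add]; ring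
      _ = K * M * Real.exp (-(γ₁ / ε * t)) * Real.exp (c₁ * s) := by
          rw [show -γ₁ * ((t - s) / ε) + -(w * s) = -(γ₁ / ε * t) + c₁ * s from by
            rw [hc₁def]; field_simp; ring]
          rw [Real.exp_add]; ring
  -- integrability of the exponential bound
  have hbd_int : ∀ t : ℝ, IntegrableOn
      (fun s : ℝ => K * M * Real.exp (-(γ₁ / ε * t)) * Real.exp (c₁ * s)) (Set.Iic t) :=
    fun t => (integrableOn_exp_Iic' hc₁ t).const_mul _
  -- Bullet 1: integrability
  have hInt1 : ∀ t : ℝ, t ≤ 0 →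
      IntegrableOn (fun s : ℝ => S ((t - s) / ε) (f (x s + xhat s, y s))) (Set.Iic t) := by
    intro t ht
    apply Integrable.mono' (hbd_int t)
    · apply ContinuousOn.aestronglyMeasurable _ measurableSet_Iic
      apply ContinuousOn.congr _ (hint_eq t ht)
      apply Continuous.continuousOn
      exact hSccont.comp
        (((continuous_const.sub continuous_id).div_const ε).prodMk hFtc)
    · rw [ae_restrict_iff' measurableSet_Iic]
      exact Filter.Eventually.of_forall fun s hs => hptb t ht s hs

  -- value of the bound integral
  have hbd_val : ∀ t : ℝ,
      (∫ s in Set.Iic t, K * M * Real.exp (-(γ₁ / ε * t)) * Real.exp (c₁ * s))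
        = K * M * Real.exp (-(γ₁ / ε * t)) * (Real.exp (c₁ * t) / c₁) := by
    intro t
    rw [MeasureTheory.integral_const_mul, integral_exp_Iic_mul hc₁ t]
  -- weighted bound for J₁
  have hJ₁b : ∀ t : ℝ, t ≤ 0 → Real.exp (w * t) * ‖J₁ t‖ ≤ K * M / (γ₁ - ρ) := by
    intro t ht
    rw [hJ₁ t, norm_smul, Real.norm_eq_abs, abs_of_pos (inv_pos.mpr hε)]
    have h1 : ‖∫ s in Set.Iic t, S ((t - s) / ε) (f (x s + xhat s, y s))‖
        ≤ K * M * Real.exp (-(γ₁ / ε * t)) * (Real.exp (c₁ * t) / c₁) := by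
      refine le_trans (norm_integral_le_integral_norm _) ?_
      rw [← hbd_val t]
      exact setIntegral_mono_on (hInt1 t ht).norm (hbd_int t) measurableSet_Iic
        fun s hs => hptb t ht s hs
    calc Real.exp (w * t) * (ε⁻¹ * ‖∫ s in Set.Iic t, S ((t - s) / ε) (f (x s + xhat s, y s))‖)
        ≤ Real.exp (w * t)
            * (ε⁻¹ * (K * M * Real.exp (-(γ₁ / ε * t)) * (Real.exp (c₁ * t) / c₁))) := by
          apply mul_le_mul_of_nonneg_left _ (Real.exp_nonneg _)
          exact mul_le_mul_of_nonneg_left h1 (inv_pos.mpr hε).le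
      _ = K * M / (γ₁ - ρ) := by
          have he : Real.exp (w * t) * Real.exp (-(γ₁ / ε * t)) * Real.exp (c₁ * t) = 1 := by
            rw [← Real.exp_add, ← Real.exp_add,
              show w * t + -(γ₁ / ε * t) + c₁ * t = 0 from by rw [hc₁def]; ring]
            exact Real.exp_zero
          have hεc : ε⁻¹ * c₁⁻¹ = (γ₁ - ρ)⁻¹ := by
            rw [← mul_inv]
            congr 1
            rw [hc₁def, hwdef]
            field_simp
          calc Real.exp (w * t)
              * (ε⁻¹ * (K * M * Real.exp (-(γ₁ / ε * t)) * (Real.exp (c₁ * t) / c₁)))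
              = (K * M) * (Real.exp (w * t) * Real.exp (-(γ₁ / ε * t)) * Real.exp (c₁ * t))
                  * (ε⁻¹ * c₁⁻¹) := by
                rw [div_eq_mul_inv]; ring
            _ = K * M / (γ₁ - ρ) := by rw [he, hεc, div_eq_mul_inv]; ring
  -- change-of-variables representation of J₁
  have hrep : ∀ t : ℝ, t ≤ 0 →
      J₁ t = ε⁻¹ • ∫ u in Set.Ici (0:ℝ), Sc (u / ε) (Ft (t - u)) := by
    intro t ht
    rw [hJ₁ t, setIntegral_congr_fun measurableSet_Iic (hint_eq t ht),
      integral_Iic_shift t (fun s => Sc ((t - s) / ε) (Ft s))]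
    simp only [sub_sub_cancel]
  -- continuity of J₁
  have hJ₁cont : ContinuousOn J₁ (Set.Iic 0) := by
    intro t₀ ht₀
    have hmem : Set.Iic (0:ℝ) ∩ Set.Ici (t₀ - 1) ∈ nhdsWithin t₀ (Set.Iic 0) :=
      Filter.inter_mem self_mem_nhdsWithin
        (mem_nhdsWithin_of_mem_nhds (Ici_mem_nhds (by linarith)))
    have hcont : ContinuousOn
        (fun t => ε⁻¹ • ∫ u in Set.Ici (0:ℝ), Sc (u / ε) (Ft (t - u)))
        (Set.Iic 0 ∩ Set.Ici (t₀ - 1)) := by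
      apply ContinuousOn.const_smul _ ε⁻¹
      apply MeasureTheory.continuousOn_of_dominated
        (bound := fun u => K * M * Real.exp (-(w * (t₀ - 1))) * Real.exp (-(c₁ * u)))
      · intro t _
        apply Continuous.aestronglyMeasurable
        exact hSccont.comp
          ((continuous_id.div_const ε).prodMk (hFtc.comp (continuous_const.sub continuous_id)))
      · rintro t ⟨ht1, ht2⟩
        rw [ae_restrict_iff' measurableSet_Ici]
        apply Filter.Eventually.of_forall
        intro u hu
        have hu0 : (0:ℝ) ≤ u := hu
        have ht1' : t ≤ 0 := ht1
        have ht2' : t₀ - 1 ≤ t := ht2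
        have htu : t - u ≤ 0 := by linarith
        calc ‖Sc (u / ε) (Ft (t - u))‖
            = ‖S (max (u / ε) 0) (Ft (t - u))‖ := by rw [hScdef]
          _ ≤ Real.exp (-γ₁ * max (u / ε) 0) * ‖Ft (t - u)‖ :=
              hSdecay _ (le_max_right _ _) _
          _ = Real.exp (-γ₁ * (u / ε)) * ‖Ft (t - u)‖ := by
              rw [max_eq_left (div_nonneg hu0 hε.le)]
          _ ≤ Real.exp (-γ₁ * (u / ε)) * (K * M * Real.exp (-(w * (t - u)))) := by
              apply mul_le_mul_of_nonneg_left _ (Real.exp_nonneg _)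
              have h10 := hFtb (t - u)
              rwa [hτeq _ htu] at h10
          _ = K * M * Real.exp (-γ₁ * (u / ε) + -(w * (t - u))) := by
              rw [Real.exp_add]; ring
          _ ≤ K * M * Real.exp (-(w * (t₀ - 1)) + -(c₁ * u)) := by
              apply mul_le_mul_of_nonneg_left (Real.exp_le_exp.mpr _) (by positivity)
              have h8 : w * (t₀ - 1) ≤ w * t := mul_le_mul_of_nonneg_left (by linarith) hwpos.le
              rw [hc₁def]
              simp only [div_eq_mul_inv]
              linarith
          _ = K * M * Real.exp (-(w * (t₀ - 1))) * Real.exp (-(c₁ * u)) := by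
              rw [Real.exp_add]; ring
      · exact (integrableOn_exp_neg_Ici hc₁).const_mul _
      · apply Filter.Eventually.of_forall
        intro u
        apply Continuous.continuousOn
        exact hSccont.comp
          (continuous_const.prodMk (hFtc.comp (continuous_id.sub continuous_const)))
    have h9 : ContinuousWithinAt
        (fun t => ε⁻¹ • ∫ u in Set.Ici (0:ℝ), Sc (u / ε) (Ft (t - u))) (Set.Iic 0) t₀ :=
      (hcont t₀ ⟨ht₀, Set.mem_Ici.mpr (by linarith)⟩).mono_of_mem_nhdsWithin hmem
    exact h9.congr (fun t ht => hrep t ht) (hrep t₀ ht₀)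
  -- J₂ : pointwise bound for the integrand
  have hptb₂ : ∀ t : ℝ, t ≤ 0 → ∀ s ∈ Set.Icc t 0,
      ‖G (t - s) (g (x s + xhat s, y s))‖
        ≤ K * M * Real.exp (-(γ₂ * t)) * Real.exp (-(c₂ * s)) := by
    intro t ht s hs
    calc ‖G (t - s) (g (x s + xhat s, y s))‖
        ≤ Real.exp (-γ₂ * (t - s)) * ‖g (x s + xhat s, y s)‖ :=
          hGdecay _ (by linarith [hs.1, hs.2]) _
      _ ≤ Real.exp (-γ₂ * (t - s)) * (K * M * Real.exp (-(w * s))) :=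
          mul_le_mul_of_nonneg_left (hGb s hs.2) (Real.exp_nonneg _)
      _ = K * M * Real.exp (-γ₂ * (t - s) + -(w * s)) := by rw [Real.exp_add]; ring
      _ = K * M * Real.exp (-(γ₂ * t)) * Real.exp (-(c₂ * s)) := by
          rw [show -γ₂ * (t - s) + -(w * s) = -(γ₂ * t) + -(c₂ * s) from by rw [hc₂def]; ring]
          rw [Real.exp_add]; ring
  -- equality of J₂ integrands on the relevant interval
  have hint_eq₂ : ∀ t : ℝ, t ≤ 0 → Set.EqOn
      (fun s : ℝ => G (t - s) (g (x s + xhat s, y s)))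
      (fun s : ℝ => Gc (t - s) (Gt s)) (Set.uIcc 0 t) := by
    intro t ht s hs
    rw [Set.uIcc_of_ge ht] at hs
    simp only
    rw [hGceq _ (by linarith [hs.1, hs.2]), hGteq s hs.2]
  have hΘc : ∀ t : ℝ, Continuous fun s => Gc (t - s) (Gt s) := fun t =>
    hGccont.comp ((continuous_const.sub continuous_id).prodMk hGtc)
  -- Bullet 2
  have hInt2 : ∀ t : ℝ, t ≤ 0 →
      IntervalIntegrable (fun s : ℝ => G (t - s) (g (x s + xhat s, y s))) volume 0 t := by
    intro t ht
    apply ContinuousOn.intervalIntegrable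
    exact ContinuousOn.congr ((hΘc t).continuousOn) (hint_eq₂ t ht)
  -- weighted bound for J₂
  have hJ₂b : ∀ t : ℝ, t ≤ 0 → Real.exp (w * t) * ‖J₂ t‖ ≤ ‖ξ‖ + K * M / c₂ := by
    intro t ht
    rw [hJ₂ t]
    have hA : Real.exp (w * t) * ‖G t ξ‖ ≤ ‖ξ‖ := by
      calc Real.exp (w * t) * ‖G t ξ‖ ≤ Real.exp (w * t) * (Real.exp (-γ₂ * t) * ‖ξ‖) :=
            mul_le_mul_of_nonneg_left (hGdecay t ht ξ) (Real.exp_nonneg _)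
        _ = Real.exp (c₂ * t) * ‖ξ‖ := by
            rw [← mul_assoc, ← Real.exp_add]
            congr 2
            rw [hc₂def]; ring
        _ ≤ 1 * ‖ξ‖ := by
            apply mul_le_mul_of_nonneg_right _ (norm_nonneg _)
            rw [← Real.exp_zero]
            exact Real.exp_le_exp.mpr (by nlinarith)
        _ = ‖ξ‖ := one_mul _
    have hB : Real.exp (w * t) * ‖∫ s in (0:ℝ)..t, G (t - s) (g (x s + xhat s, y s))‖
        ≤ K * M / c₂ := by
      have h1 : ‖∫ s in (0:ℝ)..t, G (t - s) (g (x s + xhat s, y s))‖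
          = ‖∫ s in t..(0:ℝ), G (t - s) (g (x s + xhat s, y s))‖ := by
        rw [intervalIntegral.integral_symm, norm_neg]
      have hgint : IntervalIntegrable
          (fun s : ℝ => K * M * Real.exp (-(γ₂ * t)) * Real.exp (-(c₂ * s))) volume t 0 :=
        ((continuous_const.mul
          (Real.continuous_exp.comp ((continuous_const.mul continuous_id).neg))).intervalIntegrable t 0)
      have hae : ∀ᵐ s ∂(volume.restrict (Set.uIoc t 0)),
          ‖G (t - s) (g (x s + xhat s, y s))‖
            ≤ K * M * Real.exp (-(γ₂ * t)) * Real.exp (-(c₂ * s)) := by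
        rw [ae_restrict_iff' measurableSet_uIoc]
        apply Filter.Eventually.of_forall
        intro s hs
        have hs' : s ∈ Set.Icc t 0 := by
          rw [Set.uIoc_of_le ht] at hs
          exact ⟨hs.1.le, hs.2⟩
        exact hptb₂ t ht s hs'
      have h2 := intervalIntegral.norm_integral_le_of_norm_le
        (f := fun s : ℝ => G (t - s) (g (x s + xhat s, y s)))
        (μ := volume) (a := t) (b := 0) ht
        ((ae_restrict_iff' measurableSet_Ioc).mp (by rw [← Set.uIoc_of_le ht]; exact hae)) hgint
      have h3 : (∫ s in t..(0:ℝ), K * M * Real.exp (-(γ₂ * t)) * Real.exp (-(c₂ * s)))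
          = K * M * Real.exp (-(γ₂ * t)) * (c₂⁻¹ * (Real.exp (-(c₂ * t)) - 1)) := by
        rw [intervalIntegral.integral_const_mul]
        congr 1
        have h4 := intervalIntegral.integral_comp_mul_left (a := t) (b := 0)
          (fun u : ℝ => Real.exp (-u)) (ne_of_gt hc₂)
        simp only [mul_zero] at h4
        rw [h4, intervalIntegral.integral_comp_neg (fun u : ℝ => Real.exp u)]
        simp [integral_exp, smul_eq_mul]
      have hV : 0 ≤ K * M * Real.exp (-(γ₂ * t)) * (c₂⁻¹ * (Real.exp (-(c₂ * t)) - 1)) := by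
        have h5 : 1 ≤ Real.exp (-(c₂ * t)) := by
          rw [← Real.exp_zero]
          exact Real.exp_le_exp.mpr (by nlinarith)
        have h6 : (0:ℝ) ≤ Real.exp (-(c₂ * t)) - 1 := by linarith
        positivity
      have h7 : ‖∫ s in t..(0:ℝ), G (t - s) (g (x s + xhat s, y s))‖
          ≤ K * M * Real.exp (-(γ₂ * t)) * (c₂⁻¹ * (Real.exp (-(c₂ * t)) - 1)) := by
        refine le_trans h2 ?_
        rw [h3]
      rw [h1]
      calc Real.exp (w * t) * ‖∫ s in t..(0:ℝ), G (t - s) (g (x s + xhat s, y s))‖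
          ≤ Real.exp (w * t)
              * (K * M * Real.exp (-(γ₂ * t)) * (c₂⁻¹ * (Real.exp (-(c₂ * t)) - 1))) :=
            mul_le_mul_of_nonneg_left h7 (Real.exp_nonneg _)
        _ = K * M * c₂⁻¹ * ((Real.exp (w * t) * Real.exp (-(γ₂ * t)))
              * (Real.exp (-(c₂ * t)) - 1)) := by ring
        _ = K * M * c₂⁻¹ * (Real.exp (c₂ * t) * (Real.exp (-(c₂ * t)) - 1)) := by
            rw [← Real.exp_add, show w * t + -(γ₂ * t) = c₂ * t from by rw [hc₂def]; ring]
        _ = K * M * c₂⁻¹ * (1 - Real.exp (c₂ * t)) := by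
            congr 1
            rw [mul_sub, ← Real.exp_add, mul_one,
              show c₂ * t + -(c₂ * t) = 0 from by ring, Real.exp_zero]
        _ ≤ K * M * c₂⁻¹ * 1 := by
            apply mul_le_mul_of_nonneg_left _ (by positivity)
            have := Real.exp_nonneg (c₂ * t)
            linarith
        _ = K * M / c₂ := by rw [mul_one, div_eq_mul_inv]
    calc Real.exp (w * t) * ‖G t ξ + ∫ s in (0:ℝ)..t, G (t - s) (g (x s + xhat s, y s))‖
        ≤ Real.exp (w * t) * (‖G t ξ‖ + ‖∫ s in (0:ℝ)..t, G (t - s) (g (x s + xhat s, y s))‖) :=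
          mul_le_mul_of_nonneg_left (norm_add_le _ _) (Real.exp_nonneg _)
      _ = Real.exp (w * t) * ‖G t ξ‖
            + Real.exp (w * t) * ‖∫ s in (0:ℝ)..t, G (t - s) (g (x s + xhat s, y s))‖ := by ring
      _ ≤ ‖ξ‖ + K * M / c₂ := add_le_add hA hB
  -- continuity of J₂
  have hQc : Continuous fun t => ∫ s in (0:ℝ)..t, Gc (t - s) (Gt s) := by
    apply intervalIntegral.continuous_parametric_intervalIntegral_of_continuous
      (f := fun t s => Gc (t - s) (Gt s)) ?_ continuous_id
    exact hGccont.comp ((continuous_fst.sub continuous_snd).prodMk (hGtc.comp continuous_snd))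
  have hJ₂cont : ContinuousOn J₂ (Set.Iic 0) := by
    apply ContinuousOn.congr (((hGcont ξ).add hQc).continuousOn)
    intro t ht
    rw [hJ₂ t]
    congr 1
    exact intervalIntegral.integral_congr (hint_eq₂ t ht)
  -- assembly
  have hbdd₁ := bddAbove_of_wbound hJ₁b
  have hbdd₂ := bddAbove_of_wbound hJ₂b
  refine ⟨hInt1, hInt2, ⟨hJ₁cont, hbdd₁⟩, ⟨hJ₂cont, hbdd₂⟩, ?_⟩
  have h1 : wnorm w J₁ ≤ K * M / (γ₁ - ρ) := wnorm_le' hJ₁b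
  have h2 : wnorm w J₂ ≤ ‖ξ‖ + K * M / c₂ := wnorm_le' hJ₂b
  have h3 : K * M / c₂ = ε * K * M / (ρ - ε * γ₂) := by
    rw [hc₂def, hwdef, show ρ / ε - γ₂ = (ρ - ε * γ₂) / ε from by field_simp,
      div_div_eq_mul_div]
    ring
  calc wnorm w J₁ + wnorm w J₂ ≤ K * M / (γ₁ - ρ) + (‖ξ‖ + K * M / c₂) := add_le_add h1 h2
    _ = (K / (γ₁ - ρ) + ε * K / (ρ - ε * γ₂)) * M + ‖ξ‖ := by
        rw [h3]
        field_simp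
        ring
end

section
/- Suppose (X, Y) ∈ C^− satisfies, for all τ ≤ t ≤ 0, the variation-of-constants identity X(t) = S((t−τ)/ε) X(τ) + (1/ε) ∫_τ^t S((t−s)/ε) f(X(s)+x̂(s), Y(s)) ds. Then X admits the Lyapunov–Perron representation: for all t ≤ 0, X(t) = (1/ε) ∫_{−∞}^t S((t−s)/ε) f(X(s)+x̂(s), Y(s)) ds. -/
open MeasureTheory

open Set Filter Topology

open Set Filter Topology in
/-- Integrability of `exp (a*s)` on `(-∞, t]` for `a > 0`. -/
lemma aux_integrableOn_exp_mul_Iic {a : ℝ} (ha : 0 < a) (t : ℝ) :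
    IntegrableOn (fun s : ℝ => Real.exp (a * s)) (Set.Iic t) := by
  have hcont : Continuous fun s : ℝ => Real.exp (a * s) :=
    Real.continuous_exp.comp (continuous_const.mul continuous_id)
  refine integrableOn_Iic_of_intervalIntegral_norm_bounded
    (a⁻¹ * Real.exp (a * t)) t (fun y => hcont.integrableOn_Ioc) tendsto_id ?_
  filter_upwards with y
  simp only [id]
  have hnorm : (∫ x in y..t, ‖Real.exp (a * x)‖) = ∫ x in y..t, Real.exp (a * x) := by
    simp [Real.norm_of_nonneg (Real.exp_pos _).le]
  rw [hnorm, intervalIntegral.integral_comp_mul_left Real.exp ha.ne',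
    integral_exp, smul_eq_mul]
  have h1 : 0 < Real.exp (a * y) := Real.exp_pos _
  have h2 : (0:ℝ) ≤ a⁻¹ := (inv_pos.mpr ha).le
  nlinarith

open Set Filter Topology in
/-- Joint continuity of `(u, x) ↦ S u x` for a strongly continuous family with
`‖S u x‖ ≤ ‖x‖`. -/
lemma aux_jointCont {H : Type*} [NormedAddCommGroup H] [NormedSpace ℝ H]
    (S : ℝ → H →L[ℝ] H)
    (hScont : ∀ x : H, ContinuousOn (fun t : ℝ => S t x) (Set.Ici 0))
    (hbound : ∀ t : ℝ, 0 ≤ t → ∀ x : H, ‖S t x‖ ≤ ‖x‖) :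
    ContinuousOn (fun p : ℝ × H => S p.1 p.2) (Set.Ici 0 ×ˢ Set.univ) := by
  rintro ⟨u₀, x₀⟩ ⟨hu₀, -⟩
  have hmem : Set.Ici (0:ℝ) ×ˢ (Set.univ : Set H) ∈
      𝓝[Set.Ici (0:ℝ) ×ˢ (Set.univ : Set H)] (u₀, x₀) := self_mem_nhdsWithin
  have h1 : Tendsto (fun p : ℝ × H => S p.1 (p.2 - x₀))
      (𝓝[Set.Ici (0:ℝ) ×ˢ (Set.univ : Set H)] (u₀, x₀)) (𝓝 0) := by
    refine squeeze_zero_norm' (a := fun p : ℝ × H => ‖p.2 - x₀‖) ?_ ?_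
    · filter_upwards [hmem] with p hp
      exact hbound p.1 hp.1 _
    · have h : Tendsto (fun p : ℝ × H => ‖p.2 - x₀‖) (𝓝 (u₀, x₀)) (𝓝 ‖x₀ - x₀‖) :=
        ((continuous_snd.sub continuous_const).norm).tendsto _
      simpa using h.mono_left nhdsWithin_le_nhds
  have hfst : Tendsto (fun p : ℝ × H => p.1)
      (𝓝[Set.Ici (0:ℝ) ×ˢ (Set.univ : Set H)] (u₀, x₀)) (𝓝[Set.Ici (0:ℝ)] u₀) := by
    refine tendsto_nhdsWithin_of_tendsto_nhds_of_eventually_within _ ?_ ?_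
    · exact continuous_fst.continuousAt.mono_left nhdsWithin_le_nhds
    · filter_upwards [hmem] with p hp using hp.1
  have h2 : Tendsto (fun p : ℝ × H => S p.1 x₀)
      (𝓝[Set.Ici (0:ℝ) ×ˢ (Set.univ : Set H)] (u₀, x₀)) (𝓝 (S u₀ x₀)) :=
    ((hScont x₀ u₀ hu₀).tendsto).comp hfst
  have hsum := h1.add h2
  rw [zero_add] at hsum
  refine hsum.congr fun p => ?_
  rw [← map_add, sub_add_cancel]

set_option maxHeartbeats 1600000 in
/-- Suppose `(X,Y) ∈ C⁻` satisfies, for all `τ ≤ t ≤ 0`, the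
variation-of-constants identity
`X(t) = S((t-τ)/ε) X(τ) + (1/ε) ∫_τ^t S((t-s)/ε) f(X(s)+x̂(s), Y(s)) ds`.
Then `X` admits the Lyapunov–Perron representation: for all `t ≤ 0`,
`X(t) = (1/ε) ∫_{-∞}^t S((t-s)/ε) f(X(s)+x̂(s), Y(s)) ds`. -/
theorem stmt6
    {H₁ H₂ : Type*}
    [NormedAddCommGroup H₁] [InnerProductSpace ℝ H₁] [CompleteSpace H₁]
    [TopologicalSpace.SeparableSpace H₁]
    [NormedAddCommGroup H₂] [InnerProductSpace ℝ H₂] [CompleteSpace H₂]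
    [TopologicalSpace.SeparableSpace H₂]
    (S : ℝ → H₁ →L[ℝ] H₁) (γ₁ : ℝ) (hγ₁ : 0 < γ₁)
    (hS0 : S 0 = 1)
    (hSadd : ∀ t s : ℝ, 0 ≤ t → 0 ≤ s → S (t + s) = (S t).comp (S s))
    (hScont : ∀ x : H₁, ContinuousOn (fun t : ℝ => S t x) (Set.Ici 0))
    (hSdecay : ∀ t : ℝ, 0 ≤ t → ∀ x : H₁, ‖S t x‖ ≤ Real.exp (-γ₁ * t) * ‖x‖)
    (f : H₁ × H₂ → H₁) (K : ℝ) (hK : 0 < K)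
    (hf : ∀ p q : H₁ × H₂, ‖f p - f q‖ ≤ K * (‖p.1 - q.1‖ + ‖p.2 - q.2‖))
    (hf0 : f (0, 0) = 0)
    (ε ρ : ℝ) (hε : 0 < ε) (hρ : 0 < ρ) (hgap : K < γ₁ - ρ)
    (xhat : ℝ → H₁) (hxhat : MemCminus (ρ / ε) xhat)
    (X : ℝ → H₁) (Y : ℝ → H₂)
    (hX : MemCminus (ρ / ε) X) (hY : MemCminus (ρ / ε) Y)
    (hvoc : ∀ τ t : ℝ, τ ≤ t → t ≤ 0 →
      X t = S ((t - τ) / ε) (X τ) +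
        ε⁻¹ • ∫ s in τ..t, S ((t - s) / ε) (f (X s + xhat s, Y s))) :
    ∀ t : ℝ, t ≤ 0 →
      IntegrableOn (fun s : ℝ => S ((t - s) / ε) (f (X s + xhat s, Y s))) (Set.Iic t) ∧
      X t = ε⁻¹ • ∫ s in Set.Iic t, S ((t - s) / ε) (f (X s + xhat s, Y s)) := by
  classical
  -- the uniform contraction bound `‖S u x‖ ≤ ‖x‖`
  have hSb : ∀ u : ℝ, 0 ≤ u → ∀ x : H₁, ‖S u x‖ ≤ ‖x‖ := by
    intro u hu x
    have h1 := hSdecay u hu x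
    have h2 : Real.exp (-γ₁ * u) ≤ 1 := by
      rw [← Real.exp_zero]
      exact Real.exp_le_exp.mpr (by nlinarith)
    nlinarith [norm_nonneg x, Real.exp_pos (-γ₁ * u)]
  -- continuity of f
  have hfc : Continuous f := by
    have hlip : LipschitzWith (Real.toNNReal (2 * K)) f := by
      refine LipschitzWith.of_dist_le_mul fun p q => ?_
      rw [dist_eq_norm, Real.coe_toNNReal _ (by positivity)]
      have h1 : ‖p.1 - q.1‖ ≤ dist p q := by
        rw [← dist_eq_norm]; rw [Prod.dist_eq]; exact le_max_left _ _
      have h2 : ‖p.2 - q.2‖ ≤ dist p q := by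
        rw [← dist_eq_norm]; rw [Prod.dist_eq]; exact le_max_right _ _
      calc ‖f p - f q‖ ≤ K * (‖p.1 - q.1‖ + ‖p.2 - q.2‖) := hf p q
        _ ≤ 2 * K * dist p q := by nlinarith
    exact hlip.continuous
  -- the nonlinearity along the path
  set g : ℝ → H₁ := fun s => f (X s + xhat s, Y s) with hg_def
  have hgc : ContinuousOn g (Set.Iic 0) :=
    hfc.comp_continuousOn ((hX.1.add hxhat.1).prodMk hY.1)
  -- extract the bounds
  obtain ⟨MX, hMX⟩ := hX.2
  obtain ⟨MH, hMH⟩ := hxhat.2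
  obtain ⟨MY, hMY⟩ := hY.2
  have hbd : ∀ (φ : ℝ → H₁) (M : ℝ),
      (∀ z ∈ Set.range (fun t : Set.Iic (0:ℝ) => Real.exp (ρ / ε * t.1) * ‖φ t.1‖), z ≤ M) →
      ∀ s : ℝ, s ≤ 0 → ‖φ s‖ ≤ M * Real.exp (-(ρ / ε * s)) := by
    intro φ M hM s hs
    have h := hM _ (Set.mem_range_self (⟨s, hs⟩ : Set.Iic (0:ℝ)))
    have hE : 0 < Real.exp (ρ / ε * s) := Real.exp_pos _
    rw [Real.exp_neg]
    calc ‖φ s‖ = ‖φ s‖ * Real.exp (ρ / ε * s) * (Real.exp (ρ / ε * s))⁻¹ := by field_simp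
      _ ≤ M * (Real.exp (ρ / ε * s))⁻¹ := by
          have h2 : ‖φ s‖ * Real.exp (ρ / ε * s) ≤ M := by nlinarith
          have := inv_pos.mpr hE
          nlinarith
  have hXb := hbd X MX hMX
  have hHb := hbd xhat MH hMH
  have hbdY : ∀ s : ℝ, s ≤ 0 → ‖Y s‖ ≤ MY * Real.exp (-(ρ / ε * s)) := by
    intro s hs
    have h := hMY (Set.mem_range_self (⟨s, hs⟩ : Set.Iic (0:ℝ)))
    have hE : 0 < Real.exp (ρ / ε * s) := Real.exp_pos _
    rw [Real.exp_neg]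
    calc ‖Y s‖ = ‖Y s‖ * Real.exp (ρ / ε * s) * (Real.exp (ρ / ε * s))⁻¹ := by field_simp
      _ ≤ MY * (Real.exp (ρ / ε * s))⁻¹ := by
          have h2 : ‖Y s‖ * Real.exp (ρ / ε * s) ≤ MY := by nlinarith
          have := inv_pos.mpr hE
          nlinarith
  -- bound on g
  set Cg : ℝ := K * (MX + MH + MY) with hCg_def
  have hgb : ∀ s : ℝ, s ≤ 0 → ‖g s‖ ≤ Cg * Real.exp (-(ρ / ε * s)) := by
    intro s hs
    have hE : 0 < Real.exp (-(ρ / ε * s)) := Real.exp_pos _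
    have h1 : ‖g s‖ ≤ K * (‖X s + xhat s‖ + ‖Y s‖) := by
      have h := hf (X s + xhat s, Y s) (0, 0)
      rw [hf0, sub_zero] at h
      simpa using h
    have h2 : ‖X s + xhat s‖ ≤ ‖X s‖ + ‖xhat s‖ := norm_add_le _ _
    have h3 := hXb s hs
    have h4 := hHb s hs
    have h5 := hbdY s hs
    calc ‖g s‖ ≤ K * (‖X s‖ + ‖xhat s‖ + ‖Y s‖) := by nlinarith
      _ ≤ K * ((MX + MH + MY) * Real.exp (-(ρ / ε * s))) := by nlinarith
      _ = Cg * Real.exp (-(ρ / ε * s)) := by rw [hCg_def]; ring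
  intro t ht
  -- continuity of the integrand on Iic t
  have hFc : ContinuousOn (fun s : ℝ => S ((t - s) / ε) (g s)) (Set.Iic t) := by
    have hmap : Set.MapsTo (fun s : ℝ => ((t - s) / ε, g s)) (Set.Iic t)
        (Set.Ici (0:ℝ) ×ˢ (Set.univ : Set H₁)) := by
      intro s hs
      have hs' : s ≤ t := hs
      exact ⟨div_nonneg (by linarith) hε.le, trivial⟩
    have hpair : ContinuousOn (fun s : ℝ => ((t - s) / ε, g s)) (Set.Iic t) :=
      (((continuous_const.sub continuous_id).div_const ε).continuousOn).prodMk
        (hgc.mono (Set.Iic_subset_Iic.mpr ht))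
    exact (aux_jointCont S hScont hSb).comp hpair hmap
  -- integrability on Iic t
  have haconst : 0 < (γ₁ - ρ) / ε := div_pos (by linarith) hε
  have hkey : ∀ s : ℝ, s ≤ t →
      ‖S ((t - s) / ε) (g s)‖ ≤
        Cg * Real.exp (-γ₁ * t / ε) * Real.exp ((γ₁ - ρ) / ε * s) := by
    intro s hs
    have hs0 : s ≤ 0 := hs.trans ht
    have h1 : ‖S ((t - s) / ε) (g s)‖ ≤ Real.exp (-γ₁ * ((t - s) / ε)) * ‖g s‖ :=
      hSdecay _ (div_nonneg (by linarith) hε.le) _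
    have h2 := hgb s hs0
    have hEpos : 0 < Real.exp (-γ₁ * ((t - s) / ε)) := Real.exp_pos _
    have hexp : Real.exp (-γ₁ * ((t - s) / ε)) * Real.exp (-(ρ / ε * s)) =
        Real.exp (-γ₁ * t / ε) * Real.exp ((γ₁ - ρ) / ε * s) := by
      rw [← Real.exp_add, ← Real.exp_add]
      congr 1
      field_simp
      ring
    calc ‖S ((t - s) / ε) (g s)‖
        ≤ Real.exp (-γ₁ * ((t - s) / ε)) * (Cg * Real.exp (-(ρ / ε * s))) := by nlinarith
      _ = Cg * (Real.exp (-γ₁ * ((t - s) / ε)) * Real.exp (-(ρ / ε * s))) := by ring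
      _ = Cg * Real.exp (-γ₁ * t / ε) * Real.exp ((γ₁ - ρ) / ε * s) := by rw [hexp]; ring
  have hInt : IntegrableOn (fun s : ℝ => S ((t - s) / ε) (g s)) (Set.Iic t) := by
    have hmeas := hFc.aestronglyMeasurable (μ := volume) measurableSet_Iic
    have hdom : Integrable (fun s : ℝ =>
        Cg * Real.exp (-γ₁ * t / ε) * Real.exp ((γ₁ - ρ) / ε * s))
        (volume.restrict (Set.Iic t)) :=
      (aux_integrableOn_exp_mul_Iic haconst t).const_mul _
    refine Integrable.mono' hdom hmeas ?_
    refine (ae_restrict_iff' measurableSet_Iic).2 (ae_of_all _ fun s hs => ?_)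
    exact hkey s hs
  refine ⟨hInt, ?_⟩
  -- limit of the linear term
  have hlim1 : Tendsto (fun τ : ℝ => S ((t - τ) / ε) (X τ)) atBot (𝓝 0) := by
    refine squeeze_zero_norm'
      (a := fun τ : ℝ => MX * Real.exp (-γ₁ * t / ε) * Real.exp ((γ₁ - ρ) / ε * τ)) ?_ ?_
    · filter_upwards [eventually_le_atBot t] with τ hτ
      have hτ0 : τ ≤ 0 := hτ.trans ht
      have h1 : ‖S ((t - τ) / ε) (X τ)‖ ≤ Real.exp (-γ₁ * ((t - τ) / ε)) * ‖X τ‖ :=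
        hSdecay _ (div_nonneg (by linarith) hε.le) _
      have h2 := hXb τ hτ0
      have hEpos : 0 < Real.exp (-γ₁ * ((t - τ) / ε)) := Real.exp_pos _
      have hexp : Real.exp (-γ₁ * ((t - τ) / ε)) * Real.exp (-(ρ / ε * τ)) =
          Real.exp (-γ₁ * t / ε) * Real.exp ((γ₁ - ρ) / ε * τ) := by
        rw [← Real.exp_add, ← Real.exp_add]
        congr 1
        field_simp
        ring
      have hXn : 0 ≤ ‖X τ‖ := norm_nonneg _
      calc ‖S ((t - τ) / ε) (X τ)‖
          ≤ Real.exp (-γ₁ * ((t - τ) / ε)) * (MX * Real.exp (-(ρ / ε * τ))) := by nlinarith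
        _ = MX * Real.exp (-γ₁ * t / ε) *
            Real.exp ((γ₁ - ρ) / ε * τ) := by
            rw [show Real.exp (-γ₁ * ((t - τ) / ε)) * (MX * Real.exp (-(ρ / ε * τ))) =
              MX * (Real.exp (-γ₁ * ((t - τ) / ε)) * Real.exp (-(ρ / ε * τ))) by ring, hexp]
            ring
    · have hexp0 : Tendsto (fun τ : ℝ => Real.exp ((γ₁ - ρ) / ε * τ)) atBot (𝓝 0) := by
        refine Real.tendsto_exp_atBot.comp ?_
        exact (tendsto_const_mul_atBot_of_pos haconst).mpr tendsto_id
      have h := hexp0.const_mul (MX * Real.exp (-γ₁ * t / ε))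
      rw [mul_zero] at h
      exact h
  -- limit of the integral term
  have hlim2 : Tendsto (fun τ : ℝ => ∫ s in τ..t, S ((t - s) / ε) (g s)) atBot
      (𝓝 (∫ s in Set.Iic t, S ((t - s) / ε) (g s))) :=
    intervalIntegral_tendsto_integral_Iic t hInt tendsto_id
  have hlim : Tendsto (fun τ : ℝ =>
      S ((t - τ) / ε) (X τ) + ε⁻¹ • ∫ s in τ..t, S ((t - s) / ε) (g s)) atBot
      (𝓝 (0 + ε⁻¹ • ∫ s in Set.Iic t, S ((t - s) / ε) (g s))) :=
    hlim1.add (hlim2.const_smul ε⁻¹)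
  have hconst : (fun τ : ℝ =>
      S ((t - τ) / ε) (X τ) + ε⁻¹ • ∫ s in τ..t, S ((t - s) / ε) (g s)) =ᶠ[atBot]
      (fun _ : ℝ => X t) := by
    filter_upwards [eventually_le_atBot t] with τ hτ
    exact (hvoc τ t hτ ht).symm
  have huniq := tendsto_nhds_unique (hlim.congr' hconst) tendsto_const_nhds
  rw [zero_add] at huniq
  exact huniq.symm
end
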